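/- arXiv:2309.11990 — 2 statements merged into one kernel-verified Lean document; each statement's English description precedes it below -/
import Mathlib

section
/- Let A ⊆ ℝ and B = ℝ \ A. The following conditions are equivalent: (a) there exist a σ-compact subset D and a closed subset C of H(A) with B ⊆ C ⊆ D; (b) there exists a closed σ-compact subset C of H(A) with B ⊆ C; (c) the closure of B in ℝ with the Euclidean topology is a σ-compact subset of H(A); (d) the closure of B in H(A) is a σ-compact subset of H(A); (e) the space H(A) is σ-compact. -/
open Set TopologicalSpace Topology Filter

/-- The Hattori topology τ(A) on ℝ: generated by the Euclidean open sets together with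
all sets [x, x+ε) with x ∈ ℝ \ A and ε > 0. -/
def hattori (A : Set ℝ) : TopologicalSpace ℝ :=
  TopologicalSpace.generateFrom
    ({s : Set ℝ | IsOpen s} ∪ {s : Set ℝ | ∃ x ∉ A, ∃ ε > 0, s = Set.Ico x (x + ε)})

/- Generic wrappers with an explicit topology parameter. -/
section wrappers
variable {X : Type*} (t : TopologicalSpace X) {s c : Set X}

lemma closure_minimal' (h : s ⊆ c) (hc : IsClosed[t] c) : closure[t] s ⊆ c :=
  closure_minimal h hc

lemma subset_closure' : s ⊆ closure[t] s := subset_closure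

lemma isClosed_closure' : IsClosed[t] (closure[t] s) := isClosed_closure

lemma mem_closure_iff_nhdsT {x : X} :
    x ∈ closure[t] s ↔ ∀ u ∈ @nhds X t x, (u ∩ s).Nonempty := mem_closure_iff_nhds

lemma sigma_of_closed_subset (hs : @IsSigmaCompact X t s) (hc : IsClosed[t] c)
    (h : c ⊆ s) : @IsSigmaCompact X t c := hs.of_isClosed_subset hc h

lemma sigma_univ (h : @SigmaCompactSpace X t) : @IsSigmaCompact X t (univ : Set X) :=
  isSigmaCompact_univ

lemma sigma_univ_iff : @IsSigmaCompact X t (univ : Set X) ↔ @SigmaCompactSpace X t :=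
  isSigmaCompact_univ_iff

lemma sigma_union {u : Set X} (hs : @IsSigmaCompact X t s) (hu : @IsSigmaCompact X t u) :
    @IsSigmaCompact X t (s ∪ u) := by
  rw [union_eq_iUnion]
  exact isSigmaCompact_iUnion _ (fun b => by cases b <;> simpa)

lemma isClosed_mono {t' : TopologicalSpace X} (h : t ≤ t') (hc : IsClosed[t'] c) :
    IsClosed[t] c := hc.mono h

end wrappers

/-- The Hattori topology is finer than the Euclidean topology. -/
lemma hattori_le (A : Set ℝ) : hattori A ≤ (inferInstance : TopologicalSpace ℝ) := by
  conv_rhs => rw [← generateFrom_setOf_isOpen (inferInstance : TopologicalSpace ℝ)]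
  exact generateFrom_anti subset_union_left

/-- At points of `A`, the Hattori neighborhood filter agrees with the Euclidean one. -/
lemma hattori_nhds_eq (A : Set ℝ) {x : ℝ} (hx : x ∈ A) : @nhds ℝ (hattori A) x = nhds x := by
  refine le_antisymm (nhds_mono (hattori_le A)) ?_
  rw [hattori, nhds_generateFrom]
  refine le_iInf fun s => le_iInf fun hs => le_principal_iff.mpr ?_
  obtain ⟨hxs, hs | ⟨y, hy, ε, hε, rfl⟩⟩ := hs
  · exact (mem_setOf.mp hs).mem_nhds hxs
  · have hyx : y < x := lt_of_le_of_ne hxs.1 (by rintro rfl; exact hy hx)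
    exact Filter.mem_of_superset (Ioo_mem_nhds hyx hxs.2) Ioo_subset_Ico_self

/-- For `B = Aᶜ`, the Hattori closure of `B` equals its Euclidean closure. -/
lemma hattori_closure_eq (A B : Set ℝ) (hB : B = Aᶜ) :
    closure[hattori A] B = closure B := by
  apply Subset.antisymm
  · exact closure_minimal' (hattori A) subset_closure
      (isClosed_mono (hattori A) (hattori_le A) isClosed_closure)
  · intro x hx
    by_cases hxA : x ∈ A
    · rw [mem_closure_iff_nhdsT (hattori A), hattori_nhds_eq A hxA]
      exact mem_closure_iff_nhds.mp hx
    · exact subset_closure' (hattori A) (by rw [hB]; exact hxA)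

/-- A Euclidean-compact subset of `A` is compact in the Hattori topology. -/
lemma hattori_isCompact {A K : Set ℝ} (hK : IsCompact K) (hKA : K ⊆ A) :
    @IsCompact ℝ (hattori A) K := fun f hf hfK => by
  obtain ⟨x, hxK, hx⟩ := hK hfK
  refine ⟨x, hxK, ?_⟩
  show Filter.NeBot (@nhds ℝ (hattori A) x ⊓ f)
  rwa [hattori_nhds_eq A (hKA hxK)]

/-- A Euclidean-open subset of `A` is σ-compact in the Hattori topology. -/
lemma hattori_isSigmaCompact_of_isOpen {A U : Set ℝ} (hU : IsOpen U) (hUA : U ⊆ A) :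
    @IsSigmaCompact ℝ (hattori A) U := by
  have hlc : LocallyCompactSpace U := hU.locallyCompactSpace
  have hsc : SigmaCompactSpace U := inferInstance
  obtain ⟨K, hKc, hKU⟩ := isSigmaCompact_iff_sigmaCompactSpace.mpr hsc
  exact ⟨K, fun n => hattori_isCompact (hKc n) (((hKU ▸ subset_iUnion K n)).trans hUA), hKU⟩

/-- Characterizations of σ-compactness of H(A), where B = ℝ \ A. -/
theorem sigmaCompact_hattori_tfae (A B : Set ℝ) (hB : B = Aᶜ) :
    [(∃ D C : Set ℝ, @IsSigmaCompact ℝ (hattori A) D ∧ IsClosed[hattori A] C ∧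
        B ⊆ C ∧ C ⊆ D),
     (∃ C : Set ℝ, IsClosed[hattori A] C ∧ @IsSigmaCompact ℝ (hattori A) C ∧ B ⊆ C),
     @IsSigmaCompact ℝ (hattori A) (closure B),
     @IsSigmaCompact ℝ (hattori A) (closure[hattori A] B),
     @SigmaCompactSpace ℝ (hattori A)].TFAE := by
  have hle := hattori_le A
  have hclos : closure[hattori A] B = closure B := hattori_closure_eq A B hB
  tfae_have 2 → 1
  | ⟨C, h1, h2, h3⟩ => ⟨C, C, h2, h1, h3, subset_rfl⟩
  tfae_have 1 → 3
  | ⟨D, C, hD, hC, hBC, hCD⟩ => by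
    have hCsc : @IsSigmaCompact ℝ (hattori A) C := sigma_of_closed_subset _ hD hC hCD
    have h1 : IsClosed[hattori A] (closure B) := isClosed_mono _ hle isClosed_closure
    have h2 : closure B ⊆ C := hclos ▸ closure_minimal' (hattori A) hBC hC
    exact sigma_of_closed_subset _ hCsc h1 h2
  tfae_have 3 → 4
  | h => by rwa [hclos]
  tfae_have 4 → 5
  | h => by
    rw [← sigma_univ_iff (hattori A), ← union_compl_self (closure B)]
    have hsubA : (closure B)ᶜ ⊆ A := by
      refine (compl_subset_compl.mpr subset_closure).trans ?_
      rw [hB, compl_compl]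
    exact sigma_union _ (hclos ▸ h)
      (hattori_isSigmaCompact_of_isOpen isClosed_closure.isOpen_compl hsubA)
  tfae_have 5 → 2
  | h =>
    ⟨closure[hattori A] B, isClosed_closure' (hattori A),
      sigma_of_closed_subset _ (sigma_univ _ h) (isClosed_closure' (hattori A)) (subset_univ _),
      subset_closure' (hattori A)⟩
  tfae_finish
end

section
/- The space H(A₁) is σ-compact. -/
open Set TopologicalSpace Topology

/-- `B₁`: the set of left endpoints of the closed intervals appearing in the standard
middle-thirds construction of the Cantor set. -/
def B1 : Set ℝ :=
  {x | ∃ n : ℕ, ∃ c : ℕ → ℝ, (∀ i, c i = 0 ∨ c i = 2) ∧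
    x = ∑ i ∈ Finset.range n, c i / 3 ^ (i + 1)}

/-- `A₁ = ℝ \ B₁`. -/
def A1 : Set ℝ := B1ᶜ

/-!
At a point of `A` the Hattori topology has Euclidean neighbourhoods, at a point outside `A` the
half-open ones `[x, x + ε)`. Hence the identity `ℝ → H(A)` is continuous on every set `S` that is
isolated from the left at each of its points outside `A`, and it maps Euclidean σ-compact such sets
to σ-compact subsets of `H(A)`. If every `b ∉ A` has a left gap `(a_b, b) ⊆ A`, the union `G` of
these gaps is open and contained in `A`, and its complement is closed and isolated from the left at
every point outside `A`; both are Euclidean σ-compact, so `H(A)` is σ-compact.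

For `A = A₁` the gaps come from the ternary digits: a point of `B₁` with `n` digits times `3ⁿ` is an
even integer, and a tail of digits beyond the `n`-th is less than `3⁻ⁿ`, so no point of `B₁` lies
in `(b - 3⁻ⁿ, b)` when `b ∈ B₁` has `n` digits.
-/

/-- `B1` is the set of values `ternarySum c n` with all digits `c i ∈ {0, 2}`, up to unfolding. -/
noncomputable def ternarySum (c : ℕ → ℝ) (n : ℕ) : ℝ :=
  ∑ i ∈ Finset.range n, c i / 3 ^ (i + 1)

section TernarySum

variable {c d : ℕ → ℝ} {k m n : ℕ}

theorem ternarySum_succ (c : ℕ → ℝ) (n : ℕ) :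
    ternarySum c (n + 1) = ternarySum c n + c n / 3 ^ (n + 1) :=
  Finset.sum_range_succ _ _

theorem ternarySum_mono (hc : ∀ i, 0 ≤ c i) : Monotone (ternarySum c) :=
  monotone_nat_of_le_succ fun n => by
    rw [ternarySum_succ]
    exact le_add_of_nonneg_right (div_nonneg (hc n) (by positivity))

theorem ternarySum_le_add_sub (hc : ∀ i, c i ≤ 2) (hnm : n ≤ m) :
    ternarySum c m ≤ ternarySum c n + 1 / 3 ^ n - 1 / 3 ^ m := by
  induction m, hnm using Nat.le_induction with
  | base => simp
  | succ m _ ih =>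
    have hdigit : c m / 3 ^ (m + 1) ≤ 1 / 3 ^ m - 1 / 3 ^ (m + 1) := by
      rw [pow_succ]
      field_simp
      linarith [hc m]
    rw [ternarySum_succ]
    linarith

theorem exists_ternarySum_mul_pow_eq_two_mul (hc : ∀ i, c i = 0 ∨ c i = 2) (hkn : k ≤ n) :
    ∃ j : ℤ, ternarySum c k * 3 ^ n = 2 * j := by
  refine ⟨∑ i ∈ Finset.range k, if c i = 2 then 3 ^ (n - 1 - i) else 0, ?_⟩
  rw [ternarySum, Finset.sum_mul]
  push_cast
  rw [Finset.mul_sum]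
  refine Finset.sum_congr rfl fun i hi => ?_
  have hin : i + 1 + (n - 1 - i) = n := by have := Finset.mem_range.mp hi; omega
  rcases hc i with h | h
  · simp [h]
  · rw [h, if_pos rfl, show (3 : ℝ) ^ n = 3 ^ (i + 1) * 3 ^ (n - 1 - i) by rw [← pow_add, hin]]
    field_simp

theorem ternarySum_le_sub_of_lt (hc : ∀ i, c i = 0 ∨ c i = 2) (hd : ∀ i, d i = 0 ∨ d i = 2)
    (hkn : k ≤ n) (hlt : ternarySum d k < ternarySum c n) :
    ternarySum d k ≤ ternarySum c n - 2 / 3 ^ n := by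
  have h3 : (0 : ℝ) < 3 ^ n := by positivity
  obtain ⟨j, hj⟩ := exists_ternarySum_mul_pow_eq_two_mul hd hkn
  obtain ⟨j', hj'⟩ := exists_ternarySum_mul_pow_eq_two_mul hc le_rfl
  have hjj' : j < j' := by
    have := mul_lt_mul_of_pos_right hlt h3
    rw [hj, hj'] at this
    exact_mod_cast (by linarith : (j : ℝ) < j')
  have hstep : (j : ℝ) + 1 ≤ j' := by exact_mod_cast hjj'
  refine le_sub_iff_add_le.mpr (le_of_mul_le_mul_right ?_ h3)
  rw [add_mul, div_mul_cancel₀ _ h3.ne', hj, hj']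
  linarith

theorem disjoint_Ioo_ternarySum_B1 (hc : ∀ i, c i = 0 ∨ c i = 2) :
    Disjoint (Ioo (ternarySum c n - 1 / 3 ^ n) (ternarySum c n)) B1 := by
  rw [Set.disjoint_left]
  rintro _ ⟨hlo, hhi⟩ ⟨m, d, hd, rfl⟩
  change ternarySum d m < _ at hhi
  change _ < ternarySum d m at hlo
  have hpos : (0 : ℝ) < 1 / 3 ^ n := by positivity
  have htwo : (2 : ℝ) / 3 ^ n = 2 * (1 / 3 ^ n) := by ring
  rcases le_total m n with hmn | hnm
  · linarith [ternarySum_le_sub_of_lt hc hd hmn hhi]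
  · have hd₀ : ∀ i, 0 ≤ d i := fun i => by rcases hd i with h | h <;> norm_num [h]
    have hd₂ : ∀ i, d i ≤ 2 := fun i => by rcases hd i with h | h <;> norm_num [h]
    have htail := ternarySum_le_add_sub hd₂ hnm
    have hmono := ternarySum_mono hd₀ hnm
    have hhead := ternarySum_le_sub_of_lt hc hd le_rfl (hmono.trans_lt hhi)
    have hpos' : (0 : ℝ) < 1 / 3 ^ m := by positivity
    linarith

end TernarySum

theorem IsSigmaCompact.union {X : Type*} [TopologicalSpace X] {s t : Set X}
    (hs : IsSigmaCompact s) (ht : IsSigmaCompact t) : IsSigmaCompact (s ∪ t) := by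
  rw [← sUnion_pair]
  exact isSigmaCompact_sUnion _ ((countable_singleton t).insert s) (by simp [hs, ht])

section Hattori

variable {A : Set ℝ}

theorem nhdsGE_le_nhds_hattori (x : ℝ) : 𝓝[≥] x ≤ @nhds ℝ (hattori A) x := by
  rw [hattori, TopologicalSpace.nhds_generateFrom]
  refine le_iInf₂ fun s ⟨hxs, hs⟩ => Filter.le_principal_iff.mpr ?_
  rcases hs with hs | ⟨a, -, ε, -, rfl⟩
  · exact mem_nhdsWithin_of_mem_nhds (IsOpen.mem_nhds hs hxs)
  · exact Ico_mem_nhdsGE_of_mem hxs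

theorem nhds_le_nhds_hattori {x : ℝ} (hx : x ∈ A) : 𝓝 x ≤ @nhds ℝ (hattori A) x := by
  rw [hattori, TopologicalSpace.nhds_generateFrom]
  refine le_iInf₂ fun s ⟨hxs, hs⟩ => Filter.le_principal_iff.mpr ?_
  rcases hs with hs | ⟨a, ha, ε, -, rfl⟩
  · exact IsOpen.mem_nhds hs hxs
  · have hax : a < x := hxs.1.lt_of_ne (by rintro rfl; exact ha hx)
    exact Filter.mem_of_superset (Ioo_mem_nhds hax hxs.2) Ioo_subset_Ico_self

theorem continuousOn_id_hattori {S : Set ℝ}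
    (hS : ∀ b ∈ S, b ∉ A → ∃ a < b, Disjoint (Ioo a b) S) :
    @ContinuousOn ℝ ℝ _ (hattori A) id S := by
  intro x hxS
  refine Filter.tendsto_id'.mpr ?_
  by_cases hxA : x ∈ A
  · exact nhdsWithin_le_nhds.trans (nhds_le_nhds_hattori hxA)
  · obtain ⟨a, hax, hdisj⟩ := hS x hxS hxA
    have hright : Ici x ∈ 𝓝[S] x := by
      filter_upwards [mem_nhdsWithin_of_mem_nhds (Ioi_mem_nhds hax), self_mem_nhdsWithin]
        with y hay hyS
      exact not_lt.mp fun hyx => disjoint_left.mp hdisj ⟨hay, hyx⟩ hyS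
    exact (nhdsWithin_le_of_mem hright).trans (nhdsGE_le_nhds_hattori x)

theorem isSigmaCompact_hattori {S : Set ℝ} (hσ : IsSigmaCompact S)
    (hS : ∀ b ∈ S, b ∉ A → ∃ a < b, Disjoint (Ioo a b) S) : @IsSigmaCompact ℝ (hattori A) S := by
  simpa only [image_id] using @IsSigmaCompact.image_of_continuousOn ℝ ℝ _ (hattori A) _ _ hσ
    (continuousOn_id_hattori hS)

theorem sigmaCompactSpace_hattori (hA : ∀ b ∉ A, ∃ a < b, Ioo a b ⊆ A) :
    @SigmaCompactSpace ℝ (hattori A) := by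
  choose a hab hgap using hA
  set G := ⋃ (b) (hb : b ∉ A), Ioo (a b hb) b
  have hG : IsOpen G := isOpen_iUnion fun b => isOpen_iUnion fun _ => isOpen_Ioo
  have hGA : G ⊆ A := iUnion₂_subset hgap
  have hGσ : @IsSigmaCompact ℝ (hattori A) G := by
    refine isSigmaCompact_hattori ?_ fun b hb hbA => absurd (hGA hb) hbA
    have := hG.locallyCompactSpace
    exact isSigmaCompact_iff_sigmaCompactSpace.mpr inferInstance
  have hFσ : @IsSigmaCompact ℝ (hattori A) Gᶜ := by
    refine isSigmaCompact_hattori ?_ fun b _ hbA =>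
      ⟨a b hbA, hab b hbA, disjoint_compl_right.mono_left fun y hy => mem_iUnion₂.mpr ⟨b, hbA, hy⟩⟩
    exact isSigmaCompact_univ.of_isClosed_subset hG.isClosed_compl (subset_univ _)
  rw [← @isSigmaCompact_univ_iff, ← union_compl_self G]
  exact @IsSigmaCompact.union ℝ (hattori A) _ _ hGσ hFσ

end Hattori

/-- The space H(A₁) is σ-compact. -/
theorem sigmaCompact_hattori_A1 : @SigmaCompactSpace ℝ (hattori A1) := by
  refine sigmaCompactSpace_hattori fun b hb => ?_
  obtain ⟨n, c, hc, rfl⟩ := not_not.mp hb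
  exact ⟨_, sub_lt_self _ (by positivity), (disjoint_Ioo_ternarySum_B1 hc).subset_compl_right⟩
end
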